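/- Let J ⊆ ℝ be an open interval, v₀ ∈ J, let l : J → V be smooth with B(l(v), l(v)) = 1 for all v ∈ J, and let A : J → End(V) be smooth with A(v₀) = id and A′(v) = −A(v) ∘ (l(v) ∧ l′(v)) for all v ∈ J (the spherical evolution map along L = ⟨l⟩ based at v₀). If 𝔮 ∈ V satisfies B(l(v), 𝔮) = 0 for all v ∈ J, then A(v)𝔮 = 𝔮 for all v ∈ J. (Hence if the family of sphere complexes L is orthogonal to a fixed lightlike vector 𝔮 the spherical evolution consists of Laguerre transformations, and if L is orthogonal to a fixed timelike vector the evolution consists of Möbius transformations.) -/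

import Mathlib

noncomputable section

/-- `V6 = ℝ⁶`. -/
abbrev V6 : Type := Fin 6 → ℝ

/-- The symmetric bilinear form of signature (4,2) on `V6`. -/
def bB6 (x y : V6) : ℝ :=
  x 0 * y 0 + x 1 * y 1 + x 2 * y 2 + x 3 * y 3 - x 4 * y 4 - x 5 * y 5

/-- The skew-symmetric endomorphism `a ∧ b` of `V6`. -/
def wedge6 (a b : V6) : V6 →L[ℝ] V6 :=
  LinearMap.toContinuousLinearMap
    { toFun := fun x => bB6 a x • b - bB6 b x • a
      map_add' := by
        intro x y
        have h1 : bB6 a (x + y) = bB6 a x + bB6 a y := by simp [bB6]; ring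
        have h2 : bB6 b (x + y) = bB6 b x + bB6 b y := by simp [bB6]; ring
        try dsimp only
        rw [h1, h2]; module
      map_smul' := by
        intro c x
        have h1 : bB6 a (c • x) = c * bB6 a x := by simp [bB6]; ring
        have h2 : bB6 b (c • x) = c * bB6 b x := by simp [bB6]; ring
        try dsimp only
        rw [h1, h2]
        simp only [RingHom.id_apply]
        module }

/-- if the family of sphere complexes `L = ⟨l⟩` is orthogonal to a fixed vector
`𝔮`, then the spherical evolution map fixes `𝔮`. -/
theorem stmt15 (J : Set ℝ) (hJo : IsOpen J) (hJc : J.OrdConnected)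
    (v₀ : ℝ) (hv₀ : v₀ ∈ J)
    (l : ℝ → V6) (hl : ContDiffOn ℝ (⊤ : ℕ∞) l J)
    (hunit : ∀ v ∈ J, bB6 (l v) (l v) = 1)
    (A : ℝ → V6 →L[ℝ] V6) (hA : ContDiffOn ℝ (⊤ : ℕ∞) A J)
    (hA0 : A v₀ = ContinuousLinearMap.id ℝ V6)
    (hA' : ∀ v ∈ J, deriv A v = -((A v).comp (wedge6 (l v) (deriv l v))))
    (q : V6) (hq : ∀ v ∈ J, bB6 (l v) q = 0) :
    ∀ v ∈ J, A v q = q := by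
  -- pairing with q in the first slot, as a continuous linear map
  set φ : V6 →L[ℝ] ℝ := LinearMap.toContinuousLinearMap
    { toFun := fun x => bB6 x q
      map_add' := by intro x y; simp [bB6]; ring
      map_smul' := by intro c x; simp [bB6]; ring } with hφ
  have hφval : ∀ x : V6, φ x = bB6 x q := fun x => rfl
  have hldiff : ∀ v ∈ J, HasDerivAt l (deriv l v) v := by
    intro v hv
    exact (((hl.differentiableOn (by simp)).differentiableAt
      (hJo.mem_nhds hv)).hasDerivAt)
  have hlq' : ∀ v ∈ J, bB6 (deriv l v) q = 0 := by
    intro v hv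
    have h1 : HasDerivAt (fun w => φ (l w)) (φ (deriv l v)) v :=
      φ.hasFDerivAt.comp_hasDerivAt v (hldiff v hv)
    have h2 : HasDerivAt (fun w => φ (l w)) 0 v := by
      refine (hasDerivAt_const v (0 : ℝ)).congr_of_eventuallyEq ?_
      filter_upwards [hJo.mem_nhds hv] with w hw
      rw [hφval, hq w hw]
    have := h1.unique h2
    rw [← hφval (deriv l v), this]
  have hwq : ∀ v ∈ J, wedge6 (l v) (deriv l v) q = 0 := by
    intro v hv
    show bB6 (l v) q • deriv l v - bB6 (deriv l v) q • l v = 0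
    rw [hq v hv, hlq' v hv]; simp
  have hAdiff : ∀ v ∈ J, HasDerivAt A (deriv A v) v := by
    intro v hv
    exact (((hA.differentiableOn (by simp)).differentiableAt
      (hJo.mem_nhds hv)).hasDerivAt)
  have hf' : ∀ v ∈ J, HasDerivAt (fun w => A w q) 0 v := by
    intro v hv
    have h := (hAdiff v hv).clm_apply (hasDerivAt_const v q)
    have h0 : deriv A v q + A v 0 = 0 := by
      rw [hA' v hv]
      simp only [ContinuousLinearMap.neg_apply, ContinuousLinearMap.comp_apply,
        hwq v hv, map_zero]
      simp
    rwa [h0] at h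
  have hconv : Convex ℝ J := convex_iff_ordConnected.mpr hJc
  intro v hv
  have hdiff : DifferentiableOn ℝ (fun w => A w q) J := fun w hw =>
    ((hf' w hw).differentiableAt).differentiableWithinAt
  have hkey : (fun w => A w q) v = (fun w => A w q) v₀ := by
    apply hconv.is_const_of_fderivWithin_eq_zero hdiff ?_ hv hv₀
    intro w hw
    rw [fderivWithin_of_isOpen hJo hw, (hf' w hw).hasFDerivAt.fderiv]
    ext t; simp
  simpa [hA0] using hkey
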